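/- Let X be a geodesic δ-hyperbolic metric space with basepoint x₀ and let φ, g, h be pairwise independent loxodromic isometries of X. Then after replacing φ, g and h by suitable positive powers, there exists C > 1000(δ + 1) such that: (1) the translation lengths of φ, g and h all lie strictly between 0.99C and C; and (2) for every reduced word w = a₁a₂⋯a_n in the letters {g, g^{-1}, h, h^{-1}, φ, φ^{-1}} (i.e. a_{i+1} ≠ a_i^{-1} for all i), there exist points p₁, …, p_{n−1} on a geodesic [x₀, w x₀], in order from closest to farthest from x₀, with d(p_i, a₁⋯a_i x₀) < 0.01C for each i. -/

import Mathlib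

open Set Filter

/-- `γ` is a geodesic from `x` to `y`, parametrized by arclength on `[0, dist x y]`. -/
def IsGeodesicFromTo {X : Type*} [MetricSpace X] (γ : ℝ → X) (x y : X) : Prop :=
  γ 0 = x ∧ γ (dist x y) = y ∧
    ∀ s ∈ Set.Icc 0 (dist x y), ∀ t ∈ Set.Icc 0 (dist x y), dist (γ s) (γ t) = |s - t|

/-- `X` is a geodesic metric space. -/
def GeodesicSpace (X : Type*) [MetricSpace X] : Prop :=
  ∀ x y : X, ∃ γ : ℝ → X, IsGeodesicFromTo γ x y

/-- `X` is Gromov `δ`-hyperbolic: geodesic triangles are `δ`-thin. -/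
def GromovHyperbolicSpace (X : Type*) [MetricSpace X] (δ : ℝ) : Prop :=
  ∀ (x y z : X) (γ₁ γ₂ γ₃ : ℝ → X),
    IsGeodesicFromTo γ₁ x y → IsGeodesicFromTo γ₂ y z → IsGeodesicFromTo γ₃ x z →
    ∀ t ∈ Set.Icc 0 (dist x z),
      ∃ s, (s ∈ Set.Icc 0 (dist x y) ∧ dist (γ₃ t) (γ₁ s) ≤ δ) ∨
           (s ∈ Set.Icc 0 (dist y z) ∧ dist (γ₃ t) (γ₂ s) ≤ δ)

/-- The isometry `g` has translation length `l` (with respect to the basepoint `x₀`;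
the value does not depend on the basepoint). -/
def HasTranslationLength {X : Type*} [MetricSpace X] (x₀ : X) (g : X ≃ᵢ X) (l : ℝ) : Prop :=
  Tendsto (fun n : ℕ => dist x₀ ((g ^ n) x₀) / n) atTop (nhds l)

/-- Loxodromic isometry: positive translation length. -/
def IsLoxodromic {X : Type*} [MetricSpace X] (x₀ : X) (g : X ≃ᵢ X) : Prop :=
  ∃ l : ℝ, 0 < l ∧ HasTranslationLength x₀ g l

/-- The Gromov product `⟨x, y⟩_w`. -/
noncomputable def gromovProd {X : Type*} [MetricSpace X] (w x y : X) : ℝ :=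
  (dist w x + dist w y - dist x y) / 2

/-- Two loxodromic isometries are independent: their fixed point pairs on the Gromov
boundary are disjoint, i.e. all four pairs of half-orbits have uniformly bounded Gromov
products. -/
def IndependentLoxodromics {X : Type*} [MetricSpace X] (x₀ : X) (g h : X ≃ᵢ X) : Prop :=
  IsLoxodromic x₀ g ∧ IsLoxodromic x₀ h ∧
  ∀ g' ∈ ({g, g⁻¹} : Set (X ≃ᵢ X)), ∀ h' ∈ ({h, h⁻¹} : Set (X ≃ᵢ X)),
    ∃ B : ℝ, ∀ n m : ℕ, gromovProd x₀ ((g' ^ (n + 1)) x₀) ((h' ^ (m + 1)) x₀) ≤ B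

namespace PingPongAux
variable {X : Type*} [MetricSpace X]

theorem gp_nonneg (w x y : X) : 0 ≤ gromovProd w x y := by
  have := dist_triangle x w y
  unfold gromovProd
  rw [dist_comm x w] at this
  linarith

theorem gp_comm (w x y : X) : gromovProd w x y = gromovProd w y x := by
  unfold gromovProd
  rw [dist_comm x y]
  ring

theorem gp_self_left (w y : X) : gromovProd w w y = 0 := by
  simp [gromovProd]

theorem gp_self_right (w x : X) : gromovProd w x w = 0 := by
  rw [gp_comm, gp_self_left]

theorem gp_le_dist (x w z : X) : gromovProd x w z ≤ dist x z := by
  have := dist_triangle x z w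
  unfold gromovProd
  rw [dist_comm z w] at this
  linarith

theorem gp_add (w x z : X) : gromovProd w x z + gromovProd x w z = dist w x := by
  unfold gromovProd
  rw [dist_comm x w, dist_comm x z]
  ring

theorem gp_isom (e : X ≃ᵢ X) (w x y : X) :
    gromovProd (e w) (e x) (e y) = gromovProd w x y := by
  unfold gromovProd
  rw [e.dist_eq, e.dist_eq, e.dist_eq]

theorem gp_le_point {γ : ℝ → X} {x y : X} (hγ : IsGeodesicFromTo γ x y) {s : ℝ}
    (hs : s ∈ Set.Icc 0 (dist x y)) (w : X) : gromovProd w x y ≤ dist w (γ s) := by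
  obtain ⟨h0, h1, h2⟩ := hγ
  have hd : (0:ℝ) ∈ Set.Icc 0 (dist x y) := ⟨le_refl _, dist_nonneg⟩
  have hD : dist x y ∈ Set.Icc 0 (dist x y) := ⟨dist_nonneg, le_refl _⟩
  have e1 : dist (γ s) x = s := by
    have := h2 s hs 0 hd; rw [h0] at this; rw [this, sub_zero, abs_of_nonneg hs.1]
  have e2 : dist (γ s) y = dist x y - s := by
    have := h2 s hs (dist x y) hD; rw [h1] at this; rw [this, abs_of_nonpos (by linarith [hs.2])]
    ring
  have t1 := dist_triangle w (γ s) x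
  have t2 := dist_triangle w (γ s) y
  unfold gromovProd
  linarith

theorem close_point {δ : ℝ} (hδ : 0 ≤ δ) (hgeo : GeodesicSpace X)
    (hhyp : GromovHyperbolicSpace X δ) {γ : ℝ → X} {x z : X}
    (hγ : IsGeodesicFromTo γ x z) (w : X) :
    dist (γ (gromovProd x w z)) w ≤ gromovProd w x z + 2 * δ := by
  obtain ⟨γ₁, hγ₁⟩ := hgeo x w
  obtain ⟨γ₂, hγ₂⟩ := hgeo w z
  set t := gromovProd x w z with ht
  have htmem : t ∈ Set.Icc 0 (dist x z) := ⟨gp_nonneg _ _ _, gp_le_dist _ _ _⟩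
  obtain ⟨s, hcase⟩ := hhyp x w z γ₁ γ₂ γ hγ₁ hγ₂ hγ t htmem
  obtain ⟨h30, h31, h32⟩ := hγ
  have e3 : dist x (γ t) = t := by
    have := h32 0 ⟨le_refl _, dist_nonneg⟩ t htmem
    rw [h30] at this; rw [this, abs_of_nonpos (by linarith [htmem.1])]; ring
  have e4 : dist z (γ t) = dist x z - t := by
    have := h32 (dist x z) ⟨dist_nonneg, le_refl _⟩ t htmem
    rw [h31] at this; rw [this, abs_of_nonneg (by linarith [htmem.2])]
  rcases hcase with ⟨hsmem, hclose⟩ | ⟨hsmem, hclose⟩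
  · -- on [x, w]
    obtain ⟨h10, h11, h12⟩ := hγ₁
    have e1 : dist x (γ₁ s) = s := by
      have := h12 0 ⟨le_refl _, dist_nonneg⟩ s hsmem
      rw [h10] at this; rw [this, abs_of_nonpos (by linarith [hsmem.1])]; ring
    have e2 : dist w (γ₁ s) = dist x w - s := by
      have := h12 (dist x w) ⟨dist_nonneg, le_refl _⟩ s hsmem
      rw [h11] at this; rw [this, abs_of_nonneg (by linarith [hsmem.2])]
    have hts : t - s ≤ δ := by
      have := dist_triangle x (γ₁ s) (γ t)
      linarith [dist_comm (γ t) (γ₁ s)]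
    have hgp : dist x w - t = gromovProd w x z := by
      have := gp_add x w z
      linarith [dist_comm x w]
    calc dist (γ t) w ≤ dist (γ t) (γ₁ s) + dist (γ₁ s) w := dist_triangle _ _ _
      _ ≤ δ + (dist x w - s) := by rw [dist_comm (γ₁ s) w]; linarith
      _ ≤ gromovProd w x z + 2*δ := by linarith
  · -- on [w, z]
    obtain ⟨h20, h21, h22⟩ := hγ₂
    have e1 : dist w (γ₂ s) = s := by
      have := h22 0 ⟨le_refl _, dist_nonneg⟩ s hsmem
      rw [h20] at this; rw [this, abs_of_nonpos (by linarith [hsmem.1])]; ring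
    have e2 : dist z (γ₂ s) = dist w z - s := by
      have := h22 (dist w z) ⟨dist_nonneg, le_refl _⟩ s hsmem
      rw [h21] at this; rw [this, abs_of_nonneg (by linarith [hsmem.2])]
    have hs' : s ≤ dist w z - (dist x z - t) + δ := by
      have := dist_triangle z (γ t) (γ₂ s)
      have t2 := dist_triangle z (γ₂ s) (γ t)
      rw [dist_comm (γ t) (γ₂ s)] at hclose
      have : dist z (γ₂ s) ≥ dist z (γ t) - δ := by
        have := dist_triangle z (γ t) (γ₂ s); linarith
      linarith
    have hgp : dist w z - (dist x z - t) = gromovProd w x z := by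
      unfold gromovProd at ht ⊢
      rw [dist_comm w x]
      linarith [ht]
    calc dist (γ t) w ≤ dist (γ t) (γ₂ s) + dist (γ₂ s) w := dist_triangle _ _ _
      _ ≤ δ + s := by rw [dist_comm (γ₂ s) w]; linarith
      _ ≤ gromovProd w x z + 2*δ := by linarith

theorem four_point {δ : ℝ} (hδ : 0 ≤ δ) (hgeo : GeodesicSpace X)
    (hhyp : GromovHyperbolicSpace X δ) (w a b c : X) :
    min (gromovProd w a b) (gromovProd w b c) ≤ gromovProd w a c + 3 * δ := by
  obtain ⟨γ₁, hγ₁⟩ := hgeo a b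
  obtain ⟨γ₂, hγ₂⟩ := hgeo b c
  obtain ⟨γ₃, hγ₃⟩ := hgeo a c
  set t := gromovProd a w c with ht
  have htmem : t ∈ Set.Icc 0 (dist a c) := ⟨gp_nonneg _ _ _, gp_le_dist _ _ _⟩
  have hclose := close_point hδ hgeo hhyp hγ₃ w
  obtain ⟨s, hcase⟩ := hhyp a b c γ₁ γ₂ γ₃ hγ₁ hγ₂ hγ₃ t htmem
  rcases hcase with ⟨hsmem, hd⟩ | ⟨hsmem, hd⟩
  · have h1 : gromovProd w a b ≤ dist w (γ₁ s) := gp_le_point hγ₁ hsmem w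
    have h2 : dist w (γ₁ s) ≤ dist w (γ₃ t) + δ := by
      have := dist_triangle w (γ₃ t) (γ₁ s); linarith
    have h3 : dist w (γ₃ t) ≤ gromovProd w a c + 2*δ := by
      rw [dist_comm]; exact hclose
    calc min (gromovProd w a b) (gromovProd w b c) ≤ gromovProd w a b := min_le_left _ _
      _ ≤ gromovProd w a c + 3*δ := by linarith
  · have h1 : gromovProd w b c ≤ dist w (γ₂ s) := gp_le_point hγ₂ hsmem w
    have h2 : dist w (γ₂ s) ≤ dist w (γ₃ t) + δ := by
      have := dist_triangle w (γ₃ t) (γ₂ s); linarith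
    have h3 : dist w (γ₃ t) ≤ gromovProd w a c + 2*δ := by
      rw [dist_comm]; exact hclose
    calc min (gromovProd w a b) (gromovProd w b c) ≤ gromovProd w b c := min_le_right _ _
      _ ≤ gromovProd w a c + 3*δ := by linarith

end PingPongAux

namespace PingPongAux
variable {X : Type*} [MetricSpace X]

section Chain
variable (y : ℕ → X) (n : ℕ) (L K δ₄ : ℝ)
variable (h4 : ∀ w a b c : X, min (gromovProd w a b) (gromovProd w b c) ≤ gromovProd w a c + δ₄)
variable (hδ₄ : 0 ≤ δ₄) (hK : 0 ≤ K) (hL : 2 * (K + δ₄) + δ₄ < L)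
variable (hdist : ∀ i, i + 1 ≤ n → L ≤ dist (y i) (y (i + 1)))
variable (hcorner : ∀ i, i + 2 ≤ n → gromovProd (y (i + 1)) (y i) (y (i + 2)) ≤ K)

include h4 hδ₄ hK hL hdist hcorner in
theorem chain_P : ∀ i, i + 1 ≤ n → gromovProd (y i) (y 0) (y (i + 1)) ≤ K + δ₄ := by
  intro i
  induction i with
  | zero => intro _; rw [gp_self_left]; linarith
  | succ i ih =>
    intro hi
    have hPi := ih (by omega)
    have hD := hdist i (by omega)
    have hGa : gromovProd (y (i + 1)) (y i) (y 0) ≥ L - (K + δ₄) := by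
      have hadd := gp_add (y (i + 1)) (y i) (y 0)
      have hc : gromovProd (y i) (y (i + 1)) (y 0) = gromovProd (y i) (y 0) (y (i + 1)) :=
        gp_comm _ _ _
      linarith [dist_comm (y i) (y (i + 1))]
    have hG := hcorner i hi
    have hmin : min (gromovProd (y (i + 1)) (y i) (y 0))
        (gromovProd (y (i + 1)) (y 0) (y (i + 2))) ≤ K + δ₄ :=
      le_trans (h4 (y (i + 1)) (y i) (y 0) (y (i + 2))) (by linarith)
    rcases min_le_iff.mp hmin with hca | hcb
    · linarith
    · exact hcb

include h4 hδ₄ hK hL hdist hcorner in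
theorem chain_Q : ∀ j, j + 1 ≤ n → gromovProd (y (j + 1)) (y n) (y j) ≤ K + δ₄ := by
  intro j hj
  set z : ℕ → X := fun i => y (n - i) with hz
  have hdist' : ∀ i, i + 1 ≤ n → L ≤ dist (z i) (z (i + 1)) := by
    intro i hi
    have e1 : n - i = (n - i - 1) + 1 := by omega
    simp only [hz]
    rw [e1, dist_comm]
    exact hdist (n - i - 1) (by omega)
  have hcorner' : ∀ i, i + 2 ≤ n → gromovProd (z (i + 1)) (z i) (z (i + 2)) ≤ K := by
    intro i hi
    have e1 : n - i = (n - i - 2) + 2 := by omega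
    have e2 : n - (i + 1) = (n - i - 2) + 1 := by omega
    have e3 : n - (i + 2) = n - i - 2 := by omega
    simp only [hz]
    rw [e1, e2, e3, gp_comm]
    exact hcorner (n - i - 2) (by omega)
  have := chain_P z n L K δ₄ h4 hδ₄ hK hL hdist' hcorner' (n - j - 1) (by omega)
  have e0 : n - 0 = n := by omega
  have e1 : n - (n - j - 1) = j + 1 := by omega
  have e2 : n - (n - j - 1 + 1) = j := by omega
  simp only [hz, e0, e1, e2] at this
  exact this

include h4 hδ₄ hK hL hdist hcorner in
theorem chain_mid : ∀ i, i ≤ n → gromovProd (y i) (y 0) (y n) ≤ K + 2 * δ₄ := by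
  intro i hi
  rcases eq_or_lt_of_le hi with rfl | hlt
  · rw [gp_self_right]; linarith
  · have hP := chain_P y n L K δ₄ h4 hδ₄ hK hL hdist hcorner i (by omega)
    have hQ := chain_Q y n L K δ₄ h4 hδ₄ hK hL hdist hcorner i (by omega)
    have hD := hdist i (by omega)
    have hB : gromovProd (y i) (y n) (y (i + 1)) ≥ L - (K + δ₄) := by
      have hadd := gp_add (y i) (y (i + 1)) (y n)
      have hc1 : gromovProd (y i) (y (i + 1)) (y n) = gromovProd (y i) (y n) (y (i + 1)) :=
        gp_comm _ _ _
      have hc2 : gromovProd (y (i + 1)) (y i) (y n) = gromovProd (y (i + 1)) (y n) (y i) :=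
        gp_comm _ _ _
      linarith
    have hmin : min (gromovProd (y i) (y 0) (y n))
        (gromovProd (y i) (y n) (y (i + 1))) ≤ K + 2 * δ₄ :=
      le_trans (h4 (y i) (y 0) (y n) (y (i + 1))) (by linarith)
    rcases min_le_iff.mp hmin with hca | hcb
    · linarith
    · linarith

include h4 hδ₄ hK hL hdist hcorner in
theorem chain_mono : ∀ i, i + 1 ≤ n →
    gromovProd (y 0) (y i) (y n) ≤ gromovProd (y 0) (y (i + 1)) (y n) := by
  intro i hi
  have hP := chain_P y n L K δ₄ h4 hδ₄ hK hL hdist hcorner i hi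
  have hQ := chain_Q y n L K δ₄ h4 hδ₄ hK hL hdist hcorner i hi
  have hD := hdist i hi
  unfold gromovProd at hP hQ ⊢
  have c1 := dist_comm (y i) (y 0)
  have c2 := dist_comm (y (i + 1)) (y i)
  have c3 := dist_comm (y (i + 1)) (y n)
  have c4 := dist_comm (y n) (y i)
  linarith

end Chain
end PingPongAux

namespace PingPongAux
variable {X : Type*} [MetricSpace X]

theorem dist_pow_add (x₀ : X) (g : X ≃ᵢ X) (m k : ℕ) :
    dist x₀ ((g ^ (m + k)) x₀) ≤ dist x₀ ((g ^ m) x₀) + dist x₀ ((g ^ k) x₀) := by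
  have e : (g ^ (m + k)) x₀ = (g ^ m) ((g ^ k) x₀) := by
    rw [pow_add]; rfl
  calc dist x₀ ((g ^ (m + k)) x₀) ≤ dist x₀ ((g ^ m) x₀) + dist ((g ^ m) x₀) ((g ^ (m + k)) x₀) :=
        dist_triangle _ _ _
    _ = dist x₀ ((g ^ m) x₀) + dist x₀ ((g ^ k) x₀) := by
        rw [e, (g ^ m).dist_eq]

theorem dist_pow_mul (x₀ : X) (g : X ≃ᵢ X) (m k : ℕ) :
    dist x₀ ((g ^ (m * k)) x₀) ≤ m * dist x₀ ((g ^ k) x₀) := by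
  induction m with
  | zero => simp
  | succ m ih =>
    have : (m + 1) * k = m * k + k := by ring
    rw [this]
    calc dist x₀ ((g ^ (m * k + k)) x₀)
        ≤ dist x₀ ((g ^ (m * k)) x₀) + dist x₀ ((g ^ k) x₀) := dist_pow_add x₀ g (m*k) k
      _ ≤ m * dist x₀ ((g ^ k) x₀) + dist x₀ ((g ^ k) x₀) := by linarith
      _ = (↑(m + 1)) * dist x₀ ((g ^ k) x₀) := by push_cast; ring

theorem le_dist_pow {x₀ : X} {g : X ≃ᵢ X} {l : ℝ} (hl : HasTranslationLength x₀ g l) (k : ℕ) :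
    (k : ℝ) * l ≤ dist x₀ ((g ^ k) x₀) := by
  rcases Nat.eq_zero_or_pos k with rfl | hk
  · simp
  have hk' : (0:ℝ) < (k:ℝ) := by exact_mod_cast hk
  have hsub : Tendsto (fun m : ℕ => dist x₀ ((g ^ (k * m)) x₀) / (↑(k * m))) atTop (nhds l) :=
    hl.comp (tendsto_atTop_mono (fun m => Nat.le_mul_of_pos_left m hk) tendsto_id)
  have hle : l ≤ dist x₀ ((g ^ k) x₀) / k := by
    apply le_of_tendsto hsub
    filter_upwards [eventually_ge_atTop 1] with m hm
    have h1 : dist x₀ ((g ^ (k * m)) x₀) ≤ (m : ℝ) * dist x₀ ((g ^ k) x₀) := by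
      have := dist_pow_mul x₀ g m k
      rwa [mul_comm k m]
    have hkm : (0:ℝ) < (↑(k * m) : ℝ) := by
      have : 0 < k * m := Nat.mul_pos hk hm
      exact_mod_cast this
    rw [div_le_div_iff₀ hkm hk']
    push_cast at hkm ⊢
    nlinarith
  rw [le_div_iff₀ hk'] at hle
  linarith

end PingPongAux

namespace PingPongAux
variable {X : Type*} [MetricSpace X]

theorem ht_pow {x₀ : X} {g : X ≃ᵢ X} {l : ℝ} (hl : HasTranslationLength x₀ g l) {k : ℕ}
    (hk : 1 ≤ k) : HasTranslationLength x₀ (g ^ k) ((k : ℝ) * l) := by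
  have hsub : Tendsto (fun n : ℕ => dist x₀ ((g ^ (k * n)) x₀) / (↑(k * n))) atTop (nhds l) :=
    hl.comp (tendsto_atTop_mono (fun n => Nat.le_mul_of_pos_left n hk) tendsto_id)
  have hmul := hsub.const_mul (k : ℝ)
  have heq : (fun n : ℕ => dist x₀ (((g ^ k) ^ n) x₀) / n) =
      fun n : ℕ => (k : ℝ) * (dist x₀ ((g ^ (k * n)) x₀) / (↑(k * n))) := by
    funext n
    rw [← pow_mul]
    rcases Nat.eq_zero_or_pos n with rfl | hn
    · simp
    · have hk0 : ((k : ℝ)) ≠ 0 := by positivity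
      have hn0 : ((n : ℝ)) ≠ 0 := by
        have : (0:ℝ) < n := by exact_mod_cast hn
        positivity
      push_cast
      field_simp
  unfold HasTranslationLength
  rw [heq]
  exact hmul

theorem dist_inv (x₀ : X) (e : X ≃ᵢ X) : dist x₀ (e⁻¹ x₀) = dist x₀ (e x₀) := by
  have := e.dist_eq x₀ (e⁻¹ x₀)
  rw [IsometryEquiv.apply_inv_self] at this
  rw [← this, dist_comm]

theorem self_corner {x₀ : X} {u : X ≃ᵢ X} {l ε : ℝ} (hl : HasTranslationLength x₀ u l)
    (k₀ m : ℕ) (hd : dist x₀ ((u ^ k₀) x₀) ≤ (k₀ : ℝ) * (l + ε)) :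
    gromovProd x₀ ((u ^ (k₀ * m))⁻¹ x₀) ((u ^ (k₀ * m)) x₀) ≤ (↑(k₀ * m) : ℝ) * ε := by
  set k := k₀ * m with hkdef
  have h1 : dist x₀ ((u ^ k)⁻¹ x₀) = dist x₀ ((u ^ k) x₀) := dist_inv _ _
  have e1 : (u ^ (2 * k)) x₀ = (u ^ k) ((u ^ k) x₀) := by
    rw [two_mul, pow_add]; rfl
  have h2 : dist ((u ^ k)⁻¹ x₀) ((u ^ k) x₀) = dist x₀ ((u ^ (2 * k)) x₀) := by
    have h := (u ^ k).dist_eq ((u ^ k)⁻¹ x₀) ((u ^ k) x₀)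
    rw [IsometryEquiv.apply_inv_self, ← e1] at h
    exact h.symm
  have h3 : dist x₀ ((u ^ k) x₀) ≤ (m : ℝ) * dist x₀ ((u ^ k₀) x₀) := by
    rw [hkdef, mul_comm k₀ m]
    exact dist_pow_mul x₀ u m k₀
  have h4 : (↑(2 * k) : ℝ) * l ≤ dist x₀ ((u ^ (2 * k)) x₀) := le_dist_pow hl (2 * k)
  have h5 : (m : ℝ) * dist x₀ ((u ^ k₀) x₀) ≤ (m : ℝ) * ((k₀ : ℝ) * (l + ε)) :=
    mul_le_mul_of_nonneg_left hd (by positivity)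
  unfold gromovProd
  rw [h1, h2]
  have hc : ((k : ℕ) : ℝ) = (k₀ : ℝ) * (m : ℝ) := by rw [hkdef]; push_cast; ring
  push_cast at h4
  rw [hc] at h4 ⊢
  linarith [h3, h5]

theorem exists_k₀ {x₀ : X} {u : X ≃ᵢ X} {l ε : ℝ} (hl : HasTranslationLength x₀ u l)
    (hε : 0 < ε) : ∃ k₀ : ℕ, 1 ≤ k₀ ∧ dist x₀ ((u ^ k₀) x₀) ≤ (k₀ : ℝ) * (l + ε) := by
  obtain ⟨N, hN⟩ := Metric.tendsto_atTop.mp hl ε hε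
  refine ⟨max N 1, le_max_right _ _, ?_⟩
  have h := hN (max N 1) (le_max_left _ _)
  rw [Real.dist_eq, abs_sub_lt_iff] at h
  have hk : (0:ℝ) < ((max N 1 : ℕ) : ℝ) := by
    have : (1:ℕ) ≤ max N 1 := le_max_right _ _
    exact_mod_cast Nat.lt_of_lt_of_le Nat.zero_lt_one this
  have hlt : dist x₀ ((u ^ max N 1) x₀) / ((max N 1 : ℕ) : ℝ) < l + ε := by linarith [h.1]
  rw [div_lt_iff₀ hk] at hlt
  linarith

theorem pairB {x₀ : X} {u v : X ≃ᵢ X} (hind : IndependentLoxodromics x₀ u v) :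
    ∃ B : ℝ, ∀ u' ∈ ({u, u⁻¹} : Set (X ≃ᵢ X)), ∀ v' ∈ ({v, v⁻¹} : Set (X ≃ᵢ X)),
      ∀ p q : ℕ, 1 ≤ p → 1 ≤ q → gromovProd x₀ ((u' ^ p) x₀) ((v' ^ q) x₀) ≤ B := by
  obtain ⟨B₁, hB₁⟩ := hind.2.2 u (Set.mem_insert _ _) v (Set.mem_insert _ _)
  obtain ⟨B₂, hB₂⟩ := hind.2.2 u (Set.mem_insert _ _) v⁻¹ (Set.mem_insert_of_mem _ rfl)
  obtain ⟨B₃, hB₃⟩ := hind.2.2 u⁻¹ (Set.mem_insert_of_mem _ rfl) v (Set.mem_insert _ _)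
  obtain ⟨B₄, hB₄⟩ := hind.2.2 u⁻¹ (Set.mem_insert_of_mem _ rfl) v⁻¹ (Set.mem_insert_of_mem _ rfl)
  refine ⟨max (max B₁ B₂) (max B₃ B₄), ?_⟩
  intro u' hu' v' hv' p q hp hq
  obtain ⟨p', rfl⟩ : ∃ p', p = p' + 1 := ⟨p - 1, by omega⟩
  obtain ⟨q', rfl⟩ : ∃ q', q = q' + 1 := ⟨q - 1, by omega⟩
  simp only [Set.mem_insert_iff, Set.mem_singleton_iff] at hu' hv'
  rcases hu' with rfl | rfl <;> rcases hv' with rfl | rfl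
  · exact le_trans (hB₁ p' q') (le_trans (le_max_left _ _) (le_max_left _ _))
  · exact le_trans (hB₂ p' q') (le_trans (le_max_right _ _) (le_max_left _ _))
  · exact le_trans (hB₃ p' q') (le_trans (le_max_left _ _) (le_max_right _ _))
  · exact le_trans (hB₄ p' q') (le_trans (le_max_right _ _) (le_max_right _ _))

end PingPongAux

namespace PingPongAux
variable {X : Type*} [MetricSpace X]

theorem choose_power {x₀ : X} {u : X ≃ᵢ X} {l C : ℝ} {k₀ : ℕ}
    (ht : HasTranslationLength x₀ u l) (hl0 : 0 < l) (hk₀1 : 1 ≤ k₀)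
    (hd : dist x₀ ((u ^ k₀) x₀) ≤ (k₀ : ℝ) * (l + l / 10000))
    (hC : 100 * ((k₀ : ℝ) * l) < C) (hC0 : 0 < C) :
    ∃ k : ℕ, 1 ≤ k ∧ HasTranslationLength x₀ (u ^ k) ((k : ℝ) * l) ∧
      0.99 * C < (k : ℝ) * l ∧ (k : ℝ) * l < C ∧
      gromovProd x₀ ((u ^ k)⁻¹ x₀) ((u ^ k) x₀) ≤ C / 10000 ∧
      0.99 * C < dist x₀ ((u ^ k) x₀) := by
  have hk₀R : (0:ℝ) < (k₀ : ℝ) := by exact_mod_cast hk₀1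
  have hl' : (0 : ℝ) < (k₀ : ℝ) * l := by positivity
  set x : ℝ := 0.99 * C / ((k₀ : ℝ) * l) with hxdef
  set m : ℕ := ⌊x⌋₊ + 1 with hmdef
  have hm1 : 1 ≤ m := by omega
  have hmR : ((m : ℕ) : ℝ) = (⌊x⌋₊ : ℝ) + 1 := by rw [hmdef]; push_cast; ring
  have hxl : x * ((k₀ : ℝ) * l) = 0.99 * C := by
    rw [hxdef]; field_simp
  have hx0 : 0 ≤ x := by positivity
  have hlo : 0.99 * C < (m : ℝ) * ((k₀ : ℝ) * l) := by
    have h1 : x < (m : ℝ) := by rw [hmR]; exact Nat.lt_floor_add_one x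
    have := mul_lt_mul_of_pos_right h1 hl'
    linarith
  have hup : (m : ℝ) * ((k₀ : ℝ) * l) < C := by
    have h1 : (m : ℝ) ≤ x + 1 := by rw [hmR]; linarith [Nat.floor_le hx0]
    have h2 := mul_le_mul_of_nonneg_right h1 (le_of_lt hl')
    linarith
  have hcast : ((k₀ * m : ℕ) : ℝ) * l = (m : ℝ) * ((k₀ : ℝ) * l) := by push_cast; ring
  have hkm1 : 1 ≤ k₀ * m := Nat.one_le_iff_ne_zero.mpr (Nat.mul_ne_zero (by omega) (by omega))
  have h99 : 0.99 * C < ((k₀ * m : ℕ) : ℝ) * l := by rw [hcast]; exact hlo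
  have hltC : ((k₀ * m : ℕ) : ℝ) * l < C := by rw [hcast]; exact hup
  refine ⟨k₀ * m, hkm1, ht_pow ht hkm1, h99, hltC, ?_, ?_⟩
  · have hsc := self_corner ht k₀ m hd
    have he : ((k₀ * m : ℕ) : ℝ) * (l / 10000) = (((k₀ * m : ℕ) : ℝ) * l) / 10000 := by ring
    calc gromovProd x₀ ((u ^ (k₀ * m))⁻¹ x₀) ((u ^ (k₀ * m)) x₀)
        ≤ ((k₀ * m : ℕ) : ℝ) * (l / 10000) := hsc
      _ ≤ C / 10000 := by rw [he]; linarith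
  · have := le_dist_pow ht (k₀ * m)
    linarith

end PingPongAux

open PingPongAux in
set_option linter.unusedVariables false in

set_option maxHeartbeats 3000000 in
/-- **Observation 4.4 (ping-pong constants).** Given pairwise independent loxodromic
isometries `φ, g, h` of a geodesic `δ`-hyperbolic space, after replacing them by suitable
positive powers there is `C > 1000(δ+1)` such that all three translation lengths lie in
`(0.99C, C)`, and every reduced word `w = a₁ ⋯ a_n` in the (new) letters
`{g^{±1}, h^{±1}, φ^{±1}}` admits points `p₁, …, p_{n-1}` on any geodesic `[x₀, w x₀]`, in
order from closest to farthest from `x₀`, with `d(pᵢ, a₁ ⋯ aᵢ x₀) < 0.01 C`. -/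
theorem pingpong_constants_exist
    (X : Type*) [MetricSpace X] (δ : ℝ) (hδ : 0 < δ)
    (hgeo : GeodesicSpace X) (hhyp : GromovHyperbolicSpace X δ)
    (x₀ : X) (φ g h : X ≃ᵢ X)
    (h₁ : IndependentLoxodromics x₀ φ g)
    (h₂ : IndependentLoxodromics x₀ φ h)
    (h₃ : IndependentLoxodromics x₀ g h) :
    ∃ k₁ k₂ k₃ : ℕ, 0 < k₁ ∧ 0 < k₂ ∧ 0 < k₃ ∧ ∃ C : ℝ, 1000 * (δ + 1) < C ∧
      (∃ l : ℝ, HasTranslationLength x₀ (φ ^ k₁) l ∧ 0.99 * C < l ∧ l < C) ∧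
      (∃ l : ℝ, HasTranslationLength x₀ (g ^ k₂) l ∧ 0.99 * C < l ∧ l < C) ∧
      (∃ l : ℝ, HasTranslationLength x₀ (h ^ k₃) l ∧ 0.99 * C < l ∧ l < C) ∧
      ∀ w : List (X ≃ᵢ X),
        (∀ a ∈ w, a ∈ ({g ^ k₂, (g ^ k₂)⁻¹, h ^ k₃, (h ^ k₃)⁻¹, φ ^ k₁, (φ ^ k₁)⁻¹} :
          Set (X ≃ᵢ X))) →
        w.Chain' (fun a b => b ≠ a⁻¹) →
        ∀ γ : ℝ → X, IsGeodesicFromTo γ x₀ (w.prod x₀) →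
          ∃ s : ℕ → ℝ,
            (∀ i, 1 ≤ i → i ≤ w.length - 1 → s i ∈ Set.Icc 0 (dist x₀ (w.prod x₀))) ∧
            (∀ i j, 1 ≤ i → i ≤ j → j ≤ w.length - 1 → s i ≤ s j) ∧
            (∀ i, 1 ≤ i → i ≤ w.length - 1 →
              dist (γ (s i)) (((w.take i).prod) x₀) < 0.01 * C) := by
  obtain ⟨lφ, hlφ0, hlφ⟩ := h₁.1
  obtain ⟨lg, hlg0, hlg⟩ := h₁.2.1
  obtain ⟨lh, hlh0, hlh⟩ := h₂.2.1
  obtain ⟨Bφg, hBφg⟩ := pairB h₁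
  obtain ⟨Bφh, hBφh⟩ := pairB h₂
  obtain ⟨Bgh, hBgh⟩ := pairB h₃
  set B : ℝ := max (max Bφg Bφh) Bgh with hBdef
  have hBφg' := fun u' hu' v' hv' p q hp hq =>
    le_trans (hBφg u' hu' v' hv' p q hp hq)
      (le_trans (le_max_left _ _) (le_max_left _ _) : Bφg ≤ B)
  have hBφh' := fun u' hu' v' hv' p q hp hq =>
    le_trans (hBφh u' hu' v' hv' p q hp hq)
      (le_trans (le_max_right _ _) (le_max_left _ _) : Bφh ≤ B)
  have hBgh' := fun u' hu' v' hv' p q hp hq =>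
    le_trans (hBgh u' hu' v' hv' p q hp hq) (le_max_right _ _ : Bgh ≤ B)
  obtain ⟨a₁, ha₁1, ha₁⟩ := exists_k₀ hlφ (by positivity : (0:ℝ) < lφ / 10000)
  obtain ⟨a₂, ha₂1, ha₂⟩ := exists_k₀ hlg (by positivity : (0:ℝ) < lg / 10000)
  obtain ⟨a₃, ha₃1, ha₃⟩ := exists_k₀ hlh (by positivity : (0:ℝ) < lh / 10000)
  set C : ℝ := 1 + max (1000 * (δ + 1)) (max (1000 * (B + 1))
      (100 * max ((a₁ : ℝ) * lφ) (max ((a₂ : ℝ) * lg) ((a₃ : ℝ) * lh)))) with hCdef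
  have hCδ : 1000 * (δ + 1) < C := by
    rw [hCdef]
    have := le_max_left (1000 * (δ + 1)) (max (1000 * (B + 1))
      (100 * max ((a₁ : ℝ) * lφ) (max ((a₂ : ℝ) * lg) ((a₃ : ℝ) * lh))))
    linarith
  have hCB : 1000 * (B + 1) < C := by
    rw [hCdef]
    have := le_trans (le_max_left (1000 * (B + 1))
      (100 * max ((a₁ : ℝ) * lφ) (max ((a₂ : ℝ) * lg) ((a₃ : ℝ) * lh))))
      (le_max_right (1000 * (δ + 1)) _)
    linarith
  have hCgen : 100 * max ((a₁ : ℝ) * lφ) (max ((a₂ : ℝ) * lg) ((a₃ : ℝ) * lh)) < C := by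
    rw [hCdef]
    have := le_trans (le_max_right (1000 * (B + 1))
      (100 * max ((a₁ : ℝ) * lφ) (max ((a₂ : ℝ) * lg) ((a₃ : ℝ) * lh))))
      (le_max_right (1000 * (δ + 1)) _)
    linarith
  have hC0 : 0 < C := by linarith
  have hCφ : 100 * ((a₁ : ℝ) * lφ) < C := by
    have h1 : (a₁ : ℝ) * lφ ≤ max ((a₁ : ℝ) * lφ) (max ((a₂ : ℝ) * lg) ((a₃ : ℝ) * lh)) :=
      le_max_left _ _
    linarith
  have hCg : 100 * ((a₂ : ℝ) * lg) < C := by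
    have h1 : (a₂ : ℝ) * lg ≤ max ((a₁ : ℝ) * lφ) (max ((a₂ : ℝ) * lg) ((a₃ : ℝ) * lh)) :=
      le_trans (le_max_left _ _) (le_max_right _ _)
    linarith
  have hCh : 100 * ((a₃ : ℝ) * lh) < C := by
    have h1 : (a₃ : ℝ) * lh ≤ max ((a₁ : ℝ) * lφ) (max ((a₂ : ℝ) * lg) ((a₃ : ℝ) * lh)) :=
      le_trans (le_max_right _ _) (le_max_right _ _)
    linarith
  obtain ⟨k₁, hk₁1, htφ, h99φ, hCφ', hsφ, hdispφ⟩ := choose_power hlφ hlφ0 ha₁1 ha₁ hCφ hC0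
  obtain ⟨k₂, hk₂1, htg, h99g, hCg', hsg, hdispg⟩ := choose_power hlg hlg0 ha₂1 ha₂ hCg hC0
  obtain ⟨k₃, hk₃1, hth, h99h, hCh', hsh, hdisph⟩ := choose_power hlh hlh0 ha₃1 ha₃ hCh hC0
  refine ⟨k₁, k₂, k₃, by omega, by omega, by omega, C, hCδ,
    ⟨(k₁ : ℝ) * lφ, htφ, h99φ, hCφ'⟩, ⟨(k₂ : ℝ) * lg, htg, h99g, hCg'⟩,
    ⟨(k₃ : ℝ) * lh, hth, h99h, hCh'⟩, ?_⟩
  -- numeric constants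
  set K : ℝ := max B (C / 10000) with hKdef
  have hδC : δ < C / 1000 := by linarith
  have hBC : B < C / 1000 := by linarith
  have hKC : K < C / 1000 := max_lt hBC (by linarith)
  have hK0 : 0 ≤ K := le_trans (by positivity) (le_max_right B (C / 10000))
  have hKB : B ≤ K := le_max_left _ _
  have hKq : C / 10000 ≤ K := le_max_right _ _
  have hL : 2 * (K + 3 * δ) + 3 * δ < 0.99 * C := by norm_num; linarith
  have h4 : ∀ w a b c : X,
      min (gromovProd w a b) (gromovProd w b c) ≤ gromovProd w a c + 3 * δ :=
    four_point (le_of_lt hδ) hgeo hhyp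
  -- master letter facts
  have hlet : ∀ a : X ≃ᵢ X,
      a ∈ ({g ^ k₂, (g ^ k₂)⁻¹, h ^ k₃, (h ^ k₃)⁻¹, φ ^ k₁, (φ ^ k₁)⁻¹} : Set (X ≃ᵢ X)) →
      0.99 * C < dist x₀ (a x₀) := by
    intro a ha
    simp only [Set.mem_insert_iff, Set.mem_singleton_iff] at ha
    rcases ha with rfl | rfl | rfl | rfl | rfl | rfl
    · exact hdispg
    · rw [PingPongAux.dist_inv]; exact hdispg
    · exact hdisph
    · rw [PingPongAux.dist_inv]; exact hdisph
    · exact hdispφ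
    · rw [PingPongAux.dist_inv]; exact hdispφ
  have hBall : ∀ u' v' : X ≃ᵢ X,
      ((u' ∈ ({φ, φ⁻¹} : Set (X ≃ᵢ X)) ∧ v' ∈ ({g, g⁻¹} : Set (X ≃ᵢ X))) ∨
       (u' ∈ ({g, g⁻¹} : Set (X ≃ᵢ X)) ∧ v' ∈ ({φ, φ⁻¹} : Set (X ≃ᵢ X))) ∨
       (u' ∈ ({φ, φ⁻¹} : Set (X ≃ᵢ X)) ∧ v' ∈ ({h, h⁻¹} : Set (X ≃ᵢ X))) ∨
       (u' ∈ ({h, h⁻¹} : Set (X ≃ᵢ X)) ∧ v' ∈ ({φ, φ⁻¹} : Set (X ≃ᵢ X))) ∨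
       (u' ∈ ({g, g⁻¹} : Set (X ≃ᵢ X)) ∧ v' ∈ ({h, h⁻¹} : Set (X ≃ᵢ X))) ∨
       (u' ∈ ({h, h⁻¹} : Set (X ≃ᵢ X)) ∧ v' ∈ ({g, g⁻¹} : Set (X ≃ᵢ X)))) →
      ∀ p q : ℕ, 1 ≤ p → 1 ≤ q → gromovProd x₀ ((u' ^ p) x₀) ((v' ^ q) x₀) ≤ B := by
    rintro u' v' (⟨hu', hv'⟩ | ⟨hu', hv'⟩ | ⟨hu', hv'⟩ | ⟨hu', hv'⟩ | ⟨hu', hv'⟩ | ⟨hu', hv'⟩)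
      p q hp hq
    · exact hBφg' u' hu' v' hv' p q hp hq
    · rw [gp_comm]; exact hBφg' v' hv' u' hu' q p hq hp
    · exact hBφh' u' hu' v' hv' p q hp hq
    · rw [gp_comm]; exact hBφh' v' hv' u' hu' q p hq hp
    · exact hBgh' u' hu' v' hv' p q hp hq
    · rw [gp_comm]; exact hBgh' v' hv' u' hu' q p hq hp
  have hKcor : ∀ a : X ≃ᵢ X,
      a ∈ ({g ^ k₂, (g ^ k₂)⁻¹, h ^ k₃, (h ^ k₃)⁻¹, φ ^ k₁, (φ ^ k₁)⁻¹} : Set (X ≃ᵢ X)) →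
      ∀ b : X ≃ᵢ X,
      b ∈ ({g ^ k₂, (g ^ k₂)⁻¹, h ^ k₃, (h ^ k₃)⁻¹, φ ^ k₁, (φ ^ k₁)⁻¹} : Set (X ≃ᵢ X)) →
      b ≠ a⁻¹ → gromovProd x₀ (a⁻¹ x₀) (b x₀) ≤ K := by
    intro a ha b hb hne
    simp only [Set.mem_insert_iff, Set.mem_singleton_iff] at ha hb
    rcases ha with rfl | rfl | rfl | rfl | rfl | rfl <;>
      rcases hb with rfl | rfl | rfl | rfl | rfl | rfl <;>
      first
      | exact absurd rfl hne
      | exact absurd (inv_inv _).symm hne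
      | exact le_trans hsg hKq
      | exact le_trans hsh hKq
      | exact le_trans hsφ hKq
      | (rw [inv_inv, gp_comm]; exact le_trans hsg hKq)
      | (rw [inv_inv, gp_comm]; exact le_trans hsh hKq)
      | (rw [inv_inv, gp_comm]; exact le_trans hsφ hKq)
      | (simp only [inv_inv, ← inv_pow];
         exact le_trans (hBall _ _ (by simp) _ _ (by omega) (by omega)) hKB)
  -- the word statement
  intro w hw hchain γ hγ
  set n := w.length with hn
  set y : ℕ → X := fun i => ((w.take i).prod : X ≃ᵢ X) x₀ with hy
  have hy0 : y 0 = x₀ := by simp [hy]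
  have hyn : y n = w.prod x₀ := by simp [hy, hn]
  have hγ' : IsGeodesicFromTo γ (y 0) (y n) := by rw [hy0, hyn]; exact hγ
  have hdisty : ∀ i, i + 1 ≤ n → 0.99 * C ≤ dist (y i) (y (i + 1)) := by
    intro i hi
    have hilt : i < w.length := by omega
    have h1 : dist (y i) (y (i + 1)) = dist x₀ ((w[i]'hilt) x₀) := by
      simp only [hy]
      rw [List.prod_take_succ w i hilt]
      exact ((w.take i).prod).dist_eq x₀ _
    rw [h1]
    exact le_of_lt (hlet _ (hw _ (List.getElem_mem hilt)))
  have hcornery : ∀ i, i + 2 ≤ n → gromovProd (y (i + 1)) (y i) (y (i + 2)) ≤ K := by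
    intro i hi
    have hi1 : i < w.length := by omega
    have hi2 : i + 1 < w.length := by omega
    have e1 : y (i + 1) = ((w.take (i + 1)).prod : X ≃ᵢ X) x₀ := by simp only [hy]
    have e2 : y i = ((w.take (i + 1)).prod : X ≃ᵢ X) ((w[i]'hi1)⁻¹ x₀) := by
      simp only [hy]
      rw [List.prod_take_succ w i hi1]
      rw [IsometryEquiv.mul_apply, IsometryEquiv.apply_inv_self]
    have e3 : y (i + 2) = ((w.take (i + 1)).prod : X ≃ᵢ X) ((w[i+1]'hi2) x₀) := by
      simp only [hy]
      rw [List.prod_take_succ w (i + 1) hi2]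
      rfl
    rw [e1, e2, e3, gp_isom]
    exact hKcor _ (hw _ (List.getElem_mem hi1)) _ (hw _ (List.getElem_mem hi2))
      (List.isChain_iff_getElem.mp hchain i (by omega))
  have hchainP := chain_P y n (0.99 * C) K (3 * δ) h4 (by linarith) hK0 hL hdisty hcornery
  have hchainmid := chain_mid y n (0.99 * C) K (3 * δ) h4 (by linarith) hK0 hL hdisty hcornery
  have hchainmono := chain_mono y n (0.99 * C) K (3 * δ) h4 (by linarith) hK0 hL hdisty hcornery
  refine ⟨fun i => gromovProd (y 0) (y i) (y n), ?_, ?_, ?_⟩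
  · intro i hi1 hi2
    refine ⟨gp_nonneg _ _ _, ?_⟩
    show gromovProd (y 0) (y i) (y n) ≤ dist x₀ (w.prod x₀)
    rw [← hyn, ← hy0]
    exact gp_le_dist _ _ _
  · intro i j hi1 hij hj
    induction j, hij using Nat.le_induction with
    | base => exact le_refl _
    | succ j hij ih =>
      have hj' : j ≤ n - 1 := by omega
      exact le_trans (ih hj') (hchainmono j (by omega))
  · intro i hi1 hi2
    have hin : i ≤ n := by omega
    have hmid := hchainmid i hin
    have hcp := close_point (le_of_lt hδ) hgeo hhyp hγ' (y i)
    rw [hy0] at hcp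
    have hyi : ((w.take i).prod : X ≃ᵢ X) x₀ = y i := by simp only [hy]
    rw [hyi]
    have hyig : gromovProd x₀ (y i) (y n) = gromovProd (y 0) (y i) (y n) := by rw [hy0]
    rw [hyig] at hcp
    calc dist (γ (gromovProd (y 0) (y i) (y n))) (y i)
        ≤ gromovProd (y i) (y 0) (y n) + 2 * δ := by rw [← hy0] at hcp; exact hcp
      _ ≤ K + 2 * (3 * δ) + 2 * δ := by linarith
      _ < 0.01 * C := by norm_num; linarith
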